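/- arXiv:2011.01560 — 2 statements merged into one kernel-verified Lean document; each statement's English description precedes it below -/
import Mathlib

section
/- Let h : (-∞,0) → ℝ be convex with h(x) → ∞ as x → 0⁻. Define α(g) = liminf_{x→0⁻} (log g(x))/log(1/|x|) and β(g) = limsup_{x→0⁻} (log g(x))/log(1/|x|) for a positive function g. Then α(h'₊) ≤ α(h) + 1, where h'₊ is the right derivative of h. -/
/-!
Convexity bounds the right derivative at `2x` by the secant slope over `[2x, x]`: once
`h (2x) ≥ 0`, `h'₊(2x) ≤ h x / |x|`, i.e. `log h'₊(2x) ≤ log h(x) + log (1/|x|)`, and `h'₊ > 0`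
near `0` because `h → ∞`. As `log (1/|2x|) = log (1/|x|) - log 2` is asymptotic to
`log (1/|x|)`, points `x` where the quotient for `h` is below `s` give points `2x` where the
quotient for `h'₊` is below any `t > s + 1`.
-/

open Filter Set

/-- The right derivative of a function `h : ℝ → ℝ` at `x`. -/
noncomputable def rightDeriv (h : ℝ → ℝ) (x : ℝ) : ℝ := derivWithin h (Set.Ici x) x

/-- `α(g) = liminf_{x→0⁻} log g(x) / log(1/|x|)`, as an extended real number. -/
noncomputable def alphaInd (g : ℝ → ℝ) : EReal :=
  Filter.liminf (fun x : ℝ => ((Real.log (g x) / Real.log (1 / |x|) : ℝ) : EReal))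
    (nhdsWithin 0 (Set.Iio 0))

/-- `β(g) = limsup_{x→0⁻} log g(x) / log(1/|x|)`, as an extended real number. -/
noncomputable def betaInd (g : ℝ → ℝ) : EReal :=
  Filter.limsup (fun x : ℝ => ((Real.log (g x) / Real.log (1 / |x|) : ℝ) : EReal))
    (nhdsWithin 0 (Set.Iio 0))

open Topology

theorem rightDeriv_eq_derivWithin_Ioi (h : ℝ → ℝ) (x : ℝ) :
    rightDeriv h x = derivWithin h (Ioi x) x :=
  (derivWithin_Ioi_eq_Ici h x).symm

section Indices

theorem tendsto_log_one_div_abs_nhdsLT_zero :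
    Tendsto (fun x : ℝ => Real.log (1 / |x|)) (𝓝[<] 0) atTop := by
  have hlog : Tendsto Real.log (𝓝[<] 0) atBot :=
    Real.tendsto_log_nhdsNE_zero.mono_left (nhdsWithin_mono 0 fun x (hx : x < 0) => hx.ne)
  refine (tendsto_neg_atBot_atTop.comp hlog).congr fun x => ?_
  simp only [Function.comp, one_div, Real.log_inv, Real.log_abs]

theorem tendsto_const_mul_nhdsLT_zero {c : ℝ} (hc : 0 < c) :
    Tendsto (fun x : ℝ => c * x) (𝓝[<] 0) (𝓝[<] 0) := by
  refine tendsto_nhdsWithin_iff.2 ⟨?_, ?_⟩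
  · simpa using ((continuous_const_mul c).tendsto 0).mono_left nhdsWithin_le_nhds
  · filter_upwards [self_mem_nhdsWithin] with x (hx : x < 0)
    exact mul_neg_of_pos_of_neg hc hx

theorem log_one_div_abs_const_mul {c x : ℝ} (hc : 0 < c) (hx : x ≠ 0) :
    Real.log (1 / |c * x|) = Real.log (1 / |x|) - Real.log c := by
  rw [abs_mul, abs_of_pos hc, one_div, one_div, mul_inv,
    Real.log_mul (inv_ne_zero hc.ne') (inv_ne_zero (abs_ne_zero.2 hx)), Real.log_inv]
  ring

theorem alphaInd_le_of_log_le_comp_const_mul {f g : ℝ → ℝ} {c k : ℝ} (hc : 0 < c)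
    (hfg : ∀ᶠ x in 𝓝[<] 0, Real.log (g (c * x)) ≤ Real.log (f x) + k * Real.log (1 / |x|)) :
    alphaInd g ≤ alphaInd f + k := by
  refine EReal.le_of_forall_lt_iff_le.1 fun t ht => ?_
  have ht' : alphaInd f < ((t - k : ℝ) : EReal) := by
    rwa [EReal.coe_sub,
      EReal.lt_sub_iff_add_lt (.inl (EReal.coe_ne_bot k)) (.inl (EReal.coe_ne_top k))]
  obtain ⟨s, hfs, hst⟩ := EReal.exists_between_coe_real ht'
  have hskt : 0 < t - (s + k) := by
    have := EReal.coe_lt_coe_iff.1 hst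
    linarith
  set L : ℝ → ℝ := fun x => Real.log (1 / |x|)
  have hL : Tendsto L (𝓝[<] 0) atTop := tendsto_log_one_div_abs_nhdsLT_zero
  have hfreq : ∃ᶠ x in 𝓝[<] 0, Real.log (f x) / L x < s :=
    (frequently_lt_of_liminf_lt (by isBoundedDefault) hfs).mono fun x hx => by exact_mod_cast hx
  -- The slack `t - (s + k)` absorbs the shift `L (c * x) = L x - log c` of the denominator.
  have hev : ∀ᶠ x in 𝓝[<] 0, x < 0 ∧ max 0 (Real.log c) < L x ∧
      t * Real.log c < (t - (s + k)) * L x ∧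
      Real.log (g (c * x)) ≤ Real.log (f x) + k * L x :=
    (eventually_mem_nhdsWithin.and <| (hL.eventually_gt_atTop _).and <|
      ((hL.const_mul_atTop hskt).eventually_gt_atTop _).and hfg)
  have hgt : ∃ᶠ x in 𝓝[<] 0,
      ((Real.log (g (c * x)) / L (c * x) : ℝ) : EReal) ≤ t := by
    refine (hfreq.and_eventually hev).mono ?_
    rintro x ⟨hfx, hx, hLx, hlarge, hgx⟩
    have hL0 : 0 < L x := (le_max_left _ _).trans_lt hLx
    have hLc : 0 < L x - Real.log c := sub_pos.2 ((le_max_right _ _).trans_lt hLx)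
    have hfx' : Real.log (f x) < s * L x := (div_lt_iff₀ hL0).1 hfx
    rw [EReal.coe_le_coe_iff, show L (c * x) = L x - Real.log c from
      log_one_div_abs_const_mul hc hx.ne, div_le_iff₀ hLc]
    linarith
  exact liminf_le_of_frequently_le'
    ((frequently_map.2 hgt).filter_mono (tendsto_const_mul_nhdsLT_zero hc))

end Indices

section Convex

variable {h : ℝ → ℝ}

theorem eventually_rightDeriv_pos {a : ℝ} (hconv : ConvexOn ℝ (Iio a) h)
    (hlim : Tendsto h (𝓝[<] a) atTop) : ∀ᶠ y in 𝓝[<] a, 0 < rightDeriv h y := by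
  filter_upwards [self_mem_nhdsWithin, Ioo_mem_nhdsLT (sub_one_lt a),
    hlim.eventually_gt_atTop (h (a - 1))] with y (hy : y < a) hy1 hhy
  have hslope : 0 < slope h (a - 1) y := by
    rw [slope_def_field]
    exact div_pos (sub_pos.2 hhy) (sub_pos.2 hy1.1)
  have hy' : y ∈ interior (Iio a) := by rwa [interior_Iio]
  rw [rightDeriv_eq_derivWithin_Ioi]
  exact hslope.trans_le <| (hconv.slope_le_leftDeriv_of_mem_interior (sub_one_lt a) hy'
    hy1.1).trans (hconv.leftDeriv_le_rightDeriv_of_mem_interior hy')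

theorem log_rightDeriv_two_mul_le (hconv : ConvexOn ℝ (Iio 0) h) {x : ℝ} (hx : x < 0)
    (h2x : 0 ≤ h (2 * x)) (hpos : 0 < rightDeriv h (2 * x)) :
    Real.log (rightDeriv h (2 * x)) ≤ Real.log (h x) + Real.log (1 / |x|) := by
  have hslope : rightDeriv h (2 * x) ≤ slope h (2 * x) x := by
    rw [rightDeriv_eq_derivWithin_Ioi]
    exact hconv.rightDeriv_le_slope_of_mem_interior
      (by rw [interior_Iio]; exact mem_Iio.2 (by linarith)) hx (by linarith)
  have hbound : rightDeriv h (2 * x) ≤ h x * (1 / |x|) := by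
    rw [slope_def_field, show x - 2 * x = -x by ring] at hslope
    rw [abs_of_neg hx, ← div_eq_mul_one_div]
    exact hslope.trans (div_le_div_of_nonneg_right (by linarith) (by linarith))
  have hx' : 0 < 1 / |x| := one_div_pos.2 (abs_pos.2 hx.ne)
  have hhx : 0 < h x := pos_of_mul_pos_left (hpos.trans_le hbound) hx'.le
  calc Real.log (rightDeriv h (2 * x)) ≤ Real.log (h x * (1 / |x|)) :=
        Real.log_le_log hpos hbound
    _ = Real.log (h x) + Real.log (1 / |x|) := Real.log_mul hhx.ne' hx'.ne'

end Convex

/-- If `h` is convex on `(-∞,0)` with `h(x) → ∞` as `x → 0⁻`, then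
`α(h'₊) ≤ α(h) + 1`. -/
theorem alpha_rightDeriv_le (h : ℝ → ℝ)
    (hconv : ConvexOn ℝ (Set.Iio (0:ℝ)) h)
    (hlim : Tendsto h (nhdsWithin 0 (Set.Iio 0)) atTop) :
    alphaInd (rightDeriv h) ≤ alphaInd h + 1 := by
  have hdouble := tendsto_const_mul_nhdsLT_zero two_pos
  have hlog : ∀ᶠ x in 𝓝[<] 0,
      Real.log (rightDeriv h (2 * x)) ≤ Real.log (h x) + 1 * Real.log (1 / |x|) := by
    filter_upwards [self_mem_nhdsWithin, hdouble.eventually (hlim.eventually_ge_atTop 0),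
      hdouble.eventually (eventually_rightDeriv_pos hconv hlim)] with x hx h2x hpos
    rw [one_mul]
    exact log_rightDeriv_two_mul_le hconv hx h2x hpos
  simpa using alphaInd_le_of_log_le_comp_const_mul two_pos hlog
end

section
/- Let f be analytic in the unit disc 𝔻 with σ_M(f) > 0, where σ_M(f) = limsup_{r→1⁻} log⁺log⁺M(r,f)/log(1/(1-r)) and λ_M(f) = liminf_{r→1⁻} log⁺log⁺M(r,f)/log(1/(1-r)). Let K(r,f) = r·(log M(r,f))'₊ and λ_*(f) = liminf_{r→1⁻} log⁺K(r,f)/log(1/(1-r)). Then λ_M(f) + λ_M(f)/σ_M(f) ≤ λ_*(f) (with the convention λ_M(f)/σ_M(f) = 0 when σ_M(f) = ∞ and λ_M(f) < ∞, and the inequality understood trivially when λ_M(f) = ∞). -/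
/-!
By Hadamard's three circles theorem `s ↦ log M(eˢ, f)` is convex, and `K(r, f)` is its right
derivative at `s = log r`, so `K(r, f)` dominates the slope of every chord ending at `log r`.
Take `0 < a < λ_M(f)`, `b > σ_M(f)` and the chord starting at `ρ = 1 - (1 - r) ^ θ`, `θ = a / b`.
Then `log M(ρ, f) ≤ (1 - ρ) ^ (-b) = (1 - r) ^ (-a)` is negligible against `log M(r, f)`, which
exceeds `(1 - r) ^ (-a')` for some `a' > a`, while the chord has length
`log r - log ρ ≲ (1 - r) ^ θ`. Hence `K(r, f) ≳ (1 - r) ^ (-(a + a / b))`. When `σ_M(f) = ∞`, chords starting at a fixed radius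
give `λ_*(f) ≥ λ_M(f)`.
-/
open Filter Set

/-- Maximum modulus `M(r,f) = max_{|z|=r} |f(z)|`. -/
noncomputable def maxMod (f : ℂ → ℂ) (r : ℝ) : ℝ :=
  sSup ((fun z => ‖f z‖) '' Metric.sphere (0:ℂ) r)

/-- `log⁺ x = max (log x) 0`. -/
noncomputable def logPlus (x : ℝ) : ℝ := max (Real.log x) 0

/-- Lower order of growth `λ_M(f)`. -/
noncomputable def lowerOrder (f : ℂ → ℂ) : EReal :=
  Filter.liminf
    (fun r : ℝ => ((logPlus (logPlus (maxMod f r)) / Real.log (1 / (1 - r)) : ℝ) : EReal))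
    (nhdsWithin 1 (Set.Iio 1))

/-- Order of growth `σ_M(f)`. -/
noncomputable def upperOrder (f : ℂ → ℂ) : EReal :=
  Filter.limsup
    (fun r : ℝ => ((logPlus (logPlus (maxMod f r)) / Real.log (1 / (1 - r)) : ℝ) : EReal))
    (nhdsWithin 1 (Set.Iio 1))

/-- `K(r,f) = r · (log M(r,f))'₊`, using the right derivative. -/
noncomputable def Kfun (f : ℂ → ℂ) (r : ℝ) : ℝ :=
  r * derivWithin (fun t => Real.log (maxMod f t)) (Set.Ici r) r

/-- `λ_*(f) = liminf_{r→1⁻} log⁺ K(r,f) / log(1/(1-r))`. -/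
noncomputable def lowerStar (f : ℂ → ℂ) : EReal :=
  Filter.liminf
    (fun r : ℝ => ((logPlus (Kfun f r) / Real.log (1 / (1 - r)) : ℝ) : EReal))
    (nhdsWithin 1 (Set.Iio 1))

open Metric Topology Real

section MaximumModulus

variable {f : ℂ → ℂ} {r r₁ r₂ : ℝ}

lemma maxMod_nonneg (f : ℂ → ℂ) (r : ℝ) : 0 ≤ maxMod f r :=
  Real.sSup_nonneg <| by rintro _ ⟨z, -, rfl⟩; exact norm_nonneg _

lemma maxMod_le {C : ℝ} (hr : 0 ≤ r) (h : ∀ z ∈ sphere (0 : ℂ) r, ‖f z‖ ≤ C) :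
    maxMod f r ≤ C :=
  csSup_le ((NormedSpace.sphere_nonempty.mpr hr).image _) <| by
    rintro _ ⟨z, hz, rfl⟩; exact h z hz

lemma norm_le_maxMod (hf : ContinuousOn f (ball 0 1)) (hr : r < 1) {z : ℂ} (hz : ‖z‖ = r) :
    ‖f z‖ ≤ maxMod f r :=
  le_csSup (((isCompact_sphere 0 r).image_of_continuousOn
    (continuous_norm.comp_continuousOn (hf.mono (sphere_subset_ball hr)))).bddAbove)
    ⟨z, by simpa using hz, rfl⟩

lemma norm_le_maxMod_of_norm_le (hf : DifferentiableOn ℂ f (ball 0 1)) (hr : r < 1) {z : ℂ}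
    (hz : ‖z‖ ≤ r) : ‖f z‖ ≤ maxMod f r := by
  rcases (norm_nonneg z |>.trans hz).eq_or_lt with hr0 | hr0
  · exact norm_le_maxMod hf.continuousOn hr (by linarith [norm_nonneg z])
  refine Complex.norm_le_of_forall_mem_frontier_norm_le isBounded_ball
    (hf.diffContOnCl_ball (closedBall_subset_ball hr)) (fun w hw => ?_) ?_
  · rw [frontier_ball 0 hr0.ne'] at hw
    exact norm_le_maxMod hf.continuousOn hr (by simpa using hw)
  · rw [closure_ball 0 hr0.ne']; simpa using hz

lemma maxMod_mono (hf : DifferentiableOn ℂ f (ball 0 1)) (h0 : 0 ≤ r₁) (h12 : r₁ ≤ r₂)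
    (h2 : r₂ < 1) : maxMod f r₁ ≤ maxMod f r₂ :=
  maxMod_le h0 fun _ hz =>
    norm_le_maxMod_of_norm_le hf h2 ((mem_sphere_zero_iff_norm.mp hz).trans_le h12)

end MaximumModulus

section ThreeCircles

open Complex.HadamardThreeLines

variable {f : ℂ → ℂ}

/-- Hadamard's three circles theorem, from the three lines theorem for `f ∘ φ`,
`φ z = exp ((s₂ - s₁) z + s₁)`. -/
lemma maxMod_exp_le_interp (hf : DifferentiableOn ℂ f (ball 0 1)) {s₁ s₂ t : ℝ}
    (h12 : s₁ < s₂) (h2 : s₂ < 0) (ht : t ∈ Icc (0 : ℝ) 1) :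
    maxMod f (exp ((1 - t) * s₁ + t * s₂)) ≤
      maxMod f (exp s₁) ^ (1 - t) * maxMod f (exp s₂) ^ t := by
  set φ : ℂ → ℂ := fun z => Complex.exp ((s₂ - s₁) * z + s₁)
  have norm_φ (z : ℂ) : ‖φ z‖ = exp ((s₂ - s₁) * z.re + s₁) := by
    simp [φ, Complex.norm_exp]
  have norm_φ_le {z : ℂ} (hz : z ∈ verticalClosedStrip 0 1) : ‖φ z‖ ≤ exp s₂ := by
    rw [norm_φ, exp_le_exp]; nlinarith [hz.2]
  have hφ_ball {z : ℂ} (hz : z ∈ verticalClosedStrip 0 1) : φ z ∈ ball 0 1 := by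
    simpa using (norm_φ_le hz).trans_lt (exp_lt_one_iff.mpr h2)
  have hφ : Differentiable ℂ φ := by fun_prop
  have hd : DiffContOnCl ℂ (f ∘ φ) (verticalStrip 0 1) := by
    refine ⟨hf.comp hφ.differentiableOn fun z hz => hφ_ball ⟨hz.1.le, hz.2.le⟩, ?_⟩
    rw [verticalStrip, Complex.closure_preimage_re, closure_Ioo zero_ne_one]
    exact hf.continuousOn.comp hφ.continuous.continuousOn fun z hz => hφ_ball hz
  have hB : BddAbove ((norm ∘ f ∘ φ) '' verticalClosedStrip 0 1) := by
    refine ⟨maxMod f (exp s₂), ?_⟩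
    rintro _ ⟨z, hz, rfl⟩
    exact norm_le_maxMod_of_norm_le hf (exp_lt_one_iff.mpr h2) (norm_φ_le hz)
  have h_edge (u : ℝ) (hu : u ∈ Icc (0 : ℝ) 1) :
      ∀ z ∈ Complex.re ⁻¹' {u}, ‖(f ∘ φ) z‖ ≤ maxMod f (exp ((s₂ - s₁) * u + s₁)) := by
    intro z hz
    refine norm_le_maxMod hf.continuousOn ?_ (by rw [norm_φ, show z.re = u from hz])
    rw [exp_lt_one_iff]; nlinarith [hu.2]
  have h_three (z : ℂ) (hz : z ∈ verticalClosedStrip 0 1) :=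
    norm_le_interp_of_mem_verticalClosedStrip₀₁' (f ∘ φ) hz hd hB
      (by simpa using h_edge 0 (by simp)) (by simpa using h_edge 1 (by simp))
  refine maxMod_le (exp_pos _).le fun w hw => ?_
  rw [mem_sphere_zero_iff_norm] at hw
  have hne : (s₂ : ℂ) - s₁ ≠ 0 := by exact_mod_cast (sub_pos.mpr h12).ne'
  set z : ℂ := t + w.arg / (s₂ - s₁) * Complex.I
  have hz_re : z.re = t := by
    simp [z, Complex.div_re, Complex.div_im]
  have hφz : φ z = w := by
    have : (s₂ - s₁ : ℂ) * z + s₁ = ((1 - t) * s₁ + t * s₂ : ℝ) + w.arg * Complex.I := by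
      simp only [z]; push_cast; field_simp; ring
    simp only [φ]
    rw [this, Complex.exp_add, ← Complex.ofReal_exp, ← hw,
      Complex.norm_mul_exp_arg_mul_I]
  simpa [hφz, hz_re] using h_three z (by rw [verticalClosedStrip, mem_preimage, hz_re]; exact ht)

end ThreeCircles

section Convexity

variable {f : ℂ → ℂ} {ρ r : ℝ}

lemma convexOn_log_maxMod_exp (hf : DifferentiableOn ℂ f (ball 0 1)) (hρ : 0 < ρ)
    (hM : 0 < maxMod f ρ) :
    ConvexOn ℝ (Ico (log ρ) 0) (fun s => log (maxMod f (exp s))) := by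
  have hpos {s : ℝ} (hs : s ∈ Ico (log ρ) 0) : 0 < maxMod f (exp s) :=
    hM.trans_le <| maxMod_mono hf hρ.le ((log_le_iff_le_exp hρ).mp hs.1)
      (exp_lt_one_iff.mpr hs.2)
  refine LinearOrder.convexOn_of_lt (convex_Ico _ _) fun x hx y hy hxy a b ha hb hab => ?_
  have hmid : a • x + b • y ∈ Ico (log ρ) 0 :=
    convex_Ico _ _ hx hy ha.le hb.le hab
  obtain rfl : a = 1 - b := by linarith
  have h3 := maxMod_exp_le_interp hf hxy hy.2 ⟨hb.le, by linarith⟩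
  simp only [smul_eq_mul] at hmid ⊢
  calc log (maxMod f (exp ((1 - b) * x + b * y)))
      ≤ log (maxMod f (exp x) ^ (1 - b) * maxMod f (exp y) ^ b) := log_le_log (hpos hmid) h3
    _ = (1 - b) * log (maxMod f (exp x)) + b * log (maxMod f (exp y)) := by
      rw [log_mul (rpow_pos_of_pos (hpos hx) _).ne' (rpow_pos_of_pos (hpos hy) _).ne',
        log_rpow (hpos hx), log_rpow (hpos hy)]

lemma mul_derivWithin_Ici_eq_of_hasDerivWithinAt_comp_exp {φ : ℝ → ℝ} {d : ℝ} (hr : 0 < r)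
    (h : HasDerivWithinAt (fun s => φ (exp s)) d (Ici (log r)) (log r)) :
    r * derivWithin φ (Ici r) r = d := by
  have hcomp : HasDerivWithinAt φ (d * r⁻¹) (Ici r) r := by
    refine (h.comp r (hasDerivAt_log hr.ne').hasDerivWithinAt
      fun t ht => log_le_log hr ht).congr (fun t ht => ?_) ?_
    · simp [exp_log (hr.trans_le ht)]
    · simp [exp_log hr]
  rw [hcomp.derivWithin (uniqueDiffOn_Ici r r self_mem_Ici)]
  field_simp

lemma slope_log_maxMod_le_Kfun (hf : DifferentiableOn ℂ f (ball 0 1)) (hρ : 0 < ρ)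
    (hM : 0 < maxMod f ρ) (hρr : ρ < r) (hr : r < 1) :
    (log (maxMod f r) - log (maxMod f ρ)) / (log r - log ρ) ≤ Kfun f r := by
  set g : ℝ → ℝ := fun s => log (maxMod f (exp s))
  have hconv := convexOn_log_maxMod_exp hf hρ hM
  have hr₀ : 0 < r := hρ.trans hρr
  have hlog : log ρ < log r := log_lt_log hρ hρr
  have hs : log r ∈ interior (Ico (log ρ) 0) := by
    rw [interior_Ico]; exact ⟨hlog, log_neg hr₀ hr⟩
  have hρ_mem : log ρ ∈ Ico (log ρ) 0 := ⟨le_rfl, hlog.trans (log_neg hr₀ hr)⟩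
  calc (log (maxMod f r) - log (maxMod f ρ)) / (log r - log ρ)
      = slope g (log ρ) (log r) := by
        rw [slope_def_field]; simp only [g, exp_log hr₀, exp_log hρ]
    _ ≤ derivWithin g (Iio (log r)) (log r) :=
        hconv.slope_le_leftDeriv_of_mem_interior hρ_mem hs hlog
    _ ≤ derivWithin g (Ioi (log r)) (log r) := hconv.leftDeriv_le_rightDeriv_of_mem_interior hs
    _ = Kfun f r := (mul_derivWithin_Ici_eq_of_hasDerivWithinAt_comp_exp hr₀
        (hconv.hasDerivWithinAt_rightDeriv_of_mem_interior hs).Ici_of_Ioi).symm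

end Convexity

section LogPlus

variable {x X c : ℝ}

lemma logPlus_nonneg (x : ℝ) : 0 ≤ logPlus x := le_max_right _ _

lemma log_le_logPlus (x : ℝ) : log x ≤ logPlus x := le_max_left _ _

lemma lt_log_of_lt_logPlus (hc : 0 < c) (h : c < logPlus x) : c < log x :=
  (lt_max_iff.mp h).resolve_right hc.not_gt

lemma le_exp_logPlus (x : ℝ) : x ≤ exp (logPlus x) := by
  rcases le_or_gt x 0 with hx | hx
  · exact hx.trans (exp_pos _).le
  · exact (exp_log hx).ge.trans (exp_le_exp.mpr (log_le_logPlus x))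

lemma rpow_lt_log_of_lt_logPlus_logPlus_div (hX : 1 < X) (hc : 0 < c)
    (h : c < logPlus (logPlus x) / log X) : X ^ c < log x := by
  have hcX : 0 < c * log X := mul_pos hc (log_pos hX)
  have h₁ : c * log X < log (logPlus x) :=
    lt_log_of_lt_logPlus hcX ((lt_div_iff₀ (log_pos hX)).mp h)
  have hx : 0 < logPlus x := (logPlus_nonneg x).lt_of_ne <| by
    rintro h₀; rw [← h₀, log_zero] at h₁; linarith
  rw [rpow_def_of_pos (by linarith), mul_comm]
  exact lt_log_of_lt_logPlus (exp_pos _) ((lt_log_iff_exp_lt hx).mp h₁)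

lemma log_le_rpow_of_logPlus_logPlus_div_lt (hX : 1 < X) (h : logPlus (logPlus x) / log X < c) :
    log x ≤ X ^ c := by
  calc log x ≤ exp (logPlus (logPlus x)) := (log_le_logPlus x).trans (le_exp_logPlus _)
    _ ≤ exp (log X * c) := by
      rw [exp_le_exp, mul_comm]; exact ((div_lt_iff₀ (log_pos hX)).mp h).le
    _ = X ^ c := (rpow_def_of_pos (by linarith) c).symm

lemma le_logPlus_div_log_of_rpow_le (hX : 1 < X) (h : X ^ c ≤ x) : c ≤ logPlus x / log X := by
  rw [le_div_iff₀ (log_pos hX)]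
  calc c * log X = log (X ^ c) := (log_rpow (by linarith) c).symm
    _ ≤ log x := log_le_log (rpow_pos_of_pos (by linarith) c) h
    _ ≤ logPlus x := log_le_logPlus x

end LogPlus

section Orders

variable {f : ℂ → ℂ} {a b e C : ℝ}

lemma tendsto_one_div_one_sub_nhdsLT_atTop :
    Tendsto (fun r : ℝ => 1 / (1 - r)) (𝓝[<] 1) atTop := by
  have h : Tendsto (fun r : ℝ => 1 - r) (𝓝[<] 1) (𝓝[>] 0) := by
    refine tendsto_nhdsWithin_iff.mpr ⟨?_, eventually_nhdsWithin_of_forall fun r hr => ?_⟩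
    · have := ((continuous_sub_left (1 : ℝ)).tendsto 1).mono_left (nhdsWithin_le_nhds (s := Iio 1))
      rwa [sub_self] at this
    · simpa using hr
  simpa only [one_div, Function.comp_def] using tendsto_inv_nhdsGT_zero.comp h

lemma eventually_one_lt_one_div_one_sub : ∀ᶠ r in 𝓝[<] (1 : ℝ), 1 < 1 / (1 - r) :=
  tendsto_one_div_one_sub_nhdsLT_atTop.eventually_gt_atTop 1

lemma zero_le_liminf_logPlus_div (g : ℝ → ℝ) :
    (0 : EReal) ≤ liminf (fun r : ℝ => ((logPlus (g r) / log (1 / (1 - r)) : ℝ) : EReal))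
      (𝓝[<] 1) := by
  refine le_liminf_of_le (by isBoundedDefault) ?_
  filter_upwards [eventually_one_lt_one_div_one_sub] with r hX
  exact_mod_cast div_nonneg (logPlus_nonneg _) (log_pos hX).le

lemma lowerOrder_le_upperOrder (f : ℂ → ℂ) : lowerOrder f ≤ upperOrder f :=
  liminf_le_limsup (by isBoundedDefault) (by isBoundedDefault)

lemma eventually_rpow_lt_log_maxMod (ha : 0 < a) (h : (a : EReal) < lowerOrder f) :
    ∀ᶠ r in 𝓝[<] (1 : ℝ), (1 / (1 - r)) ^ a < log (maxMod f r) := by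
  filter_upwards [eventually_lt_of_lt_liminf h (by isBoundedDefault),
    eventually_one_lt_one_div_one_sub] with r hr hX
  exact rpow_lt_log_of_lt_logPlus_logPlus_div hX ha (by exact_mod_cast hr)

lemma eventually_log_maxMod_le_rpow (h : upperOrder f < b) :
    ∀ᶠ r in 𝓝[<] (1 : ℝ), log (maxMod f r) ≤ (1 / (1 - r)) ^ b := by
  filter_upwards [eventually_lt_of_limsup_lt h (by isBoundedDefault),
    eventually_one_lt_one_div_one_sub] with r hr hX
  exact log_le_rpow_of_logPlus_logPlus_div_lt hX (by exact_mod_cast hr)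

lemma coe_le_lowerStar_of_eventually (hC : 0 < C)
    (h : ∀ᶠ r in 𝓝[<] (1 : ℝ), C * (1 / (1 - r)) ^ e ≤ Kfun f r) :
    (e : EReal) ≤ lowerStar f := by
  refine EReal.ge_of_forall_gt_iff_ge.mp fun z hz => le_liminf_of_le (by isBoundedDefault) ?_
  have hze : 0 < e - z := sub_pos.mpr (by exact_mod_cast hz)
  filter_upwards [h, eventually_one_lt_one_div_one_sub,
    ((tendsto_rpow_atTop hze).comp tendsto_one_div_one_sub_nhdsLT_atTop).eventually_ge_atTop
      (1 / C)] with r hK hX hXe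
  have hX₀ : 0 < 1 / (1 - r) := by linarith
  refine EReal.coe_le_coe_iff.mpr (le_logPlus_div_log_of_rpow_le hX (le_trans ?_ hK))
  calc (1 / (1 - r)) ^ z = 1 / C * C * (1 / (1 - r)) ^ z := by field_simp
    _ ≤ (1 / (1 - r)) ^ (e - z) * C * (1 / (1 - r)) ^ z := by gcongr; exact hXe
    _ = C * (1 / (1 - r)) ^ e := by
      rw [mul_comm _ C, mul_assoc, ← rpow_add hX₀, sub_add_cancel]

lemma tendsto_one_sub_one_sub_rpow_nhdsLT {θ : ℝ} (hθ : 0 < θ) :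
    Tendsto (fun r : ℝ => 1 - (1 - r) ^ θ) (𝓝[<] 1) (𝓝[<] 1) := by
  refine tendsto_nhdsWithin_iff.mpr ⟨?_, eventually_nhdsWithin_of_forall fun r hr => ?_⟩
  · have h := (((continuous_sub_left (1 : ℝ)).continuousAt (x := 1)).rpow_const
      (Or.inr hθ.le)).const_sub 1
    simpa [zero_rpow hθ.ne'] using Tendsto.mono_left h nhdsWithin_le_nhds
  · simpa using rpow_pos_of_pos (sub_pos.mpr (mem_Iio.mp hr)) θ

end Orders

section Estimates

variable {f : ℂ → ℂ} {a b ρ r : ℝ}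

lemma maxMod_pos_of_log_pos (h : 0 < log (maxMod f r)) : 0 < maxMod f r :=
  (maxMod_nonneg f r).lt_of_ne <| by rintro h₀; rw [← h₀, log_zero] at h; exact h.false

lemma log_sub_log_le_two_mul_one_sub (hρ : 1 / 2 ≤ ρ) (hρr : ρ ≤ r) (hr : r ≤ 1) :
    log r - log ρ ≤ 2 * (1 - ρ) := by
  have hρ₀ : 0 < ρ := by linarith
  have h := log_le_sub_one_of_pos (div_pos (hρ₀.trans_le hρr) hρ₀)
  rw [log_div (by linarith) hρ₀.ne', div_sub_one hρ₀.ne'] at h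
  exact h.trans <| (div_le_iff₀ hρ₀).mpr (by nlinarith)

lemma div_le_Kfun (hf : DifferentiableOn ℂ f (ball 0 1)) (hρ : 0 < ρ) (hM : 0 < maxMod f ρ)
    (hρr : ρ < r) (hr : r < 1) {N D : ℝ} (hN₀ : 0 ≤ N)
    (hN : N ≤ log (maxMod f r) - log (maxMod f ρ)) (hD : log r - log ρ ≤ D) :
    N / D ≤ Kfun f r :=
  (div_le_div₀ (hN₀.trans hN) hN (sub_pos.mpr (log_lt_log hρ hρr)) hD).trans
    (slope_log_maxMod_le_Kfun hf hρ hM hρr hr)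

lemma coe_le_lowerStar_of_lt_lowerOrder (hf : DifferentiableOn ℂ f (ball 0 1)) (ha : 0 < a)
    (h : (a : EReal) < lowerOrder f) : (a : EReal) ≤ lowerStar f := by
  have hlow := eventually_rpow_lt_log_maxMod ha h
  obtain ⟨r₀, hlow₀, hr₀⟩ := (hlow.and (Ioo_mem_nhdsLT zero_lt_one)).exists
  have hM₀ : 0 < log (maxMod f r₀) :=
    (rpow_pos_of_pos (one_div_pos.mpr (sub_pos.mpr hr₀.2)) a).trans hlow₀
  have hlog₀ : 0 < -log r₀ := neg_pos.mpr (log_neg hr₀.1 hr₀.2)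
  refine coe_le_lowerStar_of_eventually (C := 1 / (2 * -log r₀)) (by positivity) ?_
  filter_upwards [hlow, Ioo_mem_nhdsLT hr₀.2,
    ((tendsto_rpow_atTop ha).comp tendsto_one_div_one_sub_nhdsLT_atTop).eventually_ge_atTop
      (2 * log (maxMod f r₀))] with r hr hr₀r hX
  simp only [Function.comp_apply] at hX
  have hr_pos : 0 < r := hr₀.1.trans hr₀r.1
  calc 1 / (2 * -log r₀) * (1 / (1 - r)) ^ a = (1 / (1 - r)) ^ a / 2 / -log r₀ := by ring
    _ ≤ Kfun f r := div_le_Kfun hf hr₀.1 (maxMod_pos_of_log_pos hM₀) hr₀r.1 hr₀r.2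
      (by have := rpow_pos_of_pos (one_div_pos.mpr (sub_pos.mpr hr₀r.2)) a; positivity)
      (by linarith) (by linarith [log_neg hr_pos hr₀r.2])

lemma coe_add_div_le_lowerStar (hf : DifferentiableOn ℂ f (ball 0 1)) (ha : 0 < a)
    (h : (a : EReal) < lowerOrder f) (hb : upperOrder f < b) :
    ((a + a / b : ℝ) : EReal) ≤ lowerStar f := by
  obtain ⟨a₁, haa₁, ha₁⟩ := EReal.exists_between_coe_real h
  have haa₁ : a < a₁ := by exact_mod_cast haa₁
  have ha₁b : a₁ < b := by
    exact_mod_cast ha₁.trans ((lowerOrder_le_upperOrder f).trans_lt hb)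
  set θ := a / b
  have hθ : 0 < θ := div_pos ha (by linarith)
  have hθb : θ * b = a := div_mul_cancel₀ a (by linarith)
  have hθ1 : θ < 1 := (div_lt_one (by linarith)).mpr (by linarith)
  set ρ : ℝ → ℝ := fun r => 1 - (1 - r) ^ θ
  have hρ := tendsto_one_sub_one_sub_rpow_nhdsLT hθ
  have hlow := eventually_rpow_lt_log_maxMod (ha.trans haa₁) ha₁
  refine coe_le_lowerStar_of_eventually (C := 1 / 2) (by norm_num) ?_
  filter_upwards [Ioo_mem_nhdsLT zero_lt_one, hlow, hρ.eventually hlow,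
    hρ.eventually (eventually_log_maxMod_le_rpow hb),
    hρ.eventually (Ioo_mem_nhdsLT (by norm_num : (1 / 2 : ℝ) < 1)),
    ((tendsto_rpow_atTop (sub_pos.mpr haa₁)).comp
      tendsto_one_div_one_sub_nhdsLT_atTop).eventually_ge_atTop 2]
    with r hr hMr hlowρ hMρ hρ_mem hX2
  simp only [Function.comp_apply] at hX2
  have hu : 0 < 1 - r := sub_pos.mpr hr.2
  have hX : 0 < 1 / (1 - r) := one_div_pos.mpr hu
  have hρ_eq : 1 - ρ r = (1 - r) ^ θ := sub_sub_cancel _ _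
  have hXθ : (1 / (1 - r)) ^ θ = ((1 - r) ^ θ)⁻¹ := by rw [one_div, inv_rpow hu.le]
  have hρr : ρ r < r := by
    have := rpow_lt_rpow_of_exponent_gt hu (by linarith [hr.1]) hθ1
    rw [rpow_one] at this
    linarith
  have hN : (1 / (1 - r)) ^ a ≤ log (maxMod f r) - log (maxMod f (ρ r)) := by
    have hMρ' : log (maxMod f (ρ r)) ≤ (1 / (1 - r)) ^ a := by
      rwa [hρ_eq, one_div, ← inv_rpow hu.le, ← rpow_mul (inv_nonneg.mpr hu.le), hθb,
        ← one_div] at hMρ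
    have hMr' : 2 * (1 / (1 - r)) ^ a ≤ log (maxMod f r) := by
      refine le_trans ?_ hMr.le
      rw [← sub_add_cancel a₁ a, rpow_add hX]
      gcongr
    linarith
  have hD : log r - log (ρ r) ≤ 2 * (1 - r) ^ θ :=
    hρ_eq ▸ log_sub_log_le_two_mul_one_sub hρ_mem.1.le hρr.le hr.2.le
  have hρ_pos : 0 < maxMod f (ρ r) :=
    maxMod_pos_of_log_pos ((rpow_pos_of_pos (one_div_pos.mpr (sub_pos.mpr hρ_mem.2)) _).trans
      hlowρ)
  calc 1 / 2 * (1 / (1 - r)) ^ (a + θ) = (1 / (1 - r)) ^ a / (2 * (1 - r) ^ θ) := by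
        rw [rpow_add hX, hXθ]; field_simp
    _ ≤ Kfun f r := div_le_Kfun hf (by linarith [hρ_mem.1]) hρ_pos hρr hr.2
        (rpow_pos_of_pos hX a).le hN hD

end Estimates

section ERealLimits

lemma coe_add_div_le_of_forall {l s : ℝ} {m : EReal} (hl : 0 < l) (hls : l ≤ s)
    (h : ∀ a b : ℝ, 0 < a → a < l → s < b → ((a + a / b : ℝ) : EReal) ≤ m) :
    ((l + l / s : ℝ) : EReal) ≤ m := by
  set g : ℝ → ℝ := fun a => a + a / (s + (l - a))
  have hg : ContinuousAt g l := by
    refine continuousAt_id.add (continuousAt_id.div (by fun_prop) ?_)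
    simp only [sub_self, add_zero]; linarith
  have hgl : g l = l + l / s := by simp [g]
  have hlim := (continuous_coe_real_ereal.continuousAt.comp hg).tendsto.mono_left
    (nhdsWithin_le_nhds (s := Iio l))
  rw [Function.comp_apply, hgl] at hlim
  refine le_of_tendsto hlim ?_
  filter_upwards [Ioo_mem_nhdsLT hl] with a ha
  exact h a _ ha.1 ha.2 (by linarith [ha.2])

lemma add_div_le_of_forall_coe {l s m : EReal} (hl : 0 ≤ l) (hls : l ≤ s) (hm : 0 ≤ m)
    (h₁ : ∀ a : ℝ, 0 < a → (a : EReal) < l → (a : EReal) ≤ m)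
    (h₂ : ∀ a b : ℝ, 0 < a → (a : EReal) < l → s < b → ((a + a / b : ℝ) : EReal) ≤ m) :
    l + l / s ≤ m := by
  rcases hl.eq_or_lt with rfl | hl
  · rwa [EReal.zero_div, add_zero]
  rcases eq_or_ne s ⊤ with rfl | hs
  · rw [EReal.div_top, add_zero]
    refine EReal.ge_of_forall_gt_iff_ge.mp fun a ha => ?_
    rcases le_or_gt a 0 with ha₀ | ha₀
    · exact (EReal.coe_le_coe_iff.mpr ha₀).trans hm
    · exact h₁ a ha₀ ha
  lift s to ℝ using ⟨hs, (hl.trans_le hls).ne_bot⟩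
  lift l to ℝ using ⟨(hls.trans_lt (EReal.coe_lt_top s)).ne, hl.ne_bot⟩
  rw [← EReal.coe_div, ← EReal.coe_add]
  exact coe_add_div_le_of_forall (EReal.coe_pos.mp hl) (EReal.coe_le_coe_iff.mp hls)
    fun a b ha hal hsb => h₂ a b ha (EReal.coe_lt_coe_iff.mpr hal) (EReal.coe_lt_coe_iff.mpr hsb)

end ERealLimits

theorem lowerOrder_add_div_le_lowerStar_general (f : ℂ → ℂ)
    (hf : DifferentiableOn ℂ f (Metric.ball (0:ℂ) 1)) :
    lowerOrder f + lowerOrder f / upperOrder f ≤ lowerStar f :=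
  add_div_le_of_forall_coe (zero_le_liminf_logPlus_div _) (lowerOrder_le_upperOrder f)
    (zero_le_liminf_logPlus_div _) (fun _ => coe_le_lowerStar_of_lt_lowerOrder hf)
    (fun _ _ => coe_add_div_le_lowerStar hf)

/-- If `f` is analytic in the unit disc and `σ_M(f) > 0`, then
`λ_M(f) + λ_M(f)/σ_M(f) ≤ λ_*(f)` (in `EReal`, where division by `∞` gives `0`). -/
theorem lowerOrder_add_div_le_lowerStar (f : ℂ → ℂ)
    (hf : DifferentiableOn ℂ f (Metric.ball (0:ℂ) 1))
    (hsigma : 0 < upperOrder f) :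
    lowerOrder f + lowerOrder f / upperOrder f ≤ lowerStar f :=
  lowerOrder_add_div_le_lowerStar_general f hf
end
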